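/- For every p ∈ ℝ³ with p ≠ 0 the following matrix identities hold: P₋(p)·(M⁻·p) = 0, (M⁻·p)·P₋(p) = 0, and P₊(p)·(M⁻·p)·P₊(p) = M⁻·p. -/
import Mathlib


noncomputable section
open MeasureTheory Matrix Complex Filter Topology
open scoped Kronecker ENNReal InnerProductSpace RealInnerProductSpace

/-- Pauli matrices -/
def σ1 : Matrix (Fin 2) (Fin 2) ℂ := !![0, 1; 1, 0]
def σ2 : Matrix (Fin 2) (Fin 2) ℂ := !![0, -I; I, 0]
def σ3 : Matrix (Fin 2) (Fin 2) ℂ := !![1, 0; 0, -1]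

/-- Dirac alpha matrices in standard representation -/
def diracAlpha' (s : Matrix (Fin 2) (Fin 2) ℂ) : Matrix (Fin 4) (Fin 4) ℂ :=
  Matrix.reindex finSumFinEquiv finSumFinEquiv (Matrix.fromBlocks 0 s s 0)

def diracAlpha : Fin 3 → Matrix (Fin 4) (Fin 4) ℂ
  | 0 => diracAlpha' σ1
  | 1 => diracAlpha' σ2
  | 2 => diracAlpha' σ3

def diracBeta : Matrix (Fin 4) (Fin 4) ℂ :=
  Matrix.reindex finSumFinEquiv finSumFinEquiv
    (Matrix.fromBlocks (1 : Matrix (Fin 2) (Fin 2) ℂ) 0 0 (-1 : Matrix (Fin 2) (Fin 2) ℂ))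

abbrev R3 := EuclideanSpace ℝ (Fin 3)
abbrev C16 := EuclideanSpace ℂ (Fin 16)

/-- α·p -/
def alphaDot (p : R3) : Matrix (Fin 4) (Fin 4) ℂ :=
  ∑ j : Fin 3, (p j : ℂ) • diracAlpha j

/-- reindexing 4×4 Kronecker products to 16×16 matrices -/
def kron16 (A B : Matrix (Fin 4) (Fin 4) ℂ) : Matrix (Fin 16) (Fin 16) ℂ :=
  Matrix.reindex finProdFinEquiv finProdFinEquiv (A ⊗ₖ B)

/-- M⁻·p -/
def Mminus (p : R3) : Matrix (Fin 16) (Fin 16) ℂ :=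
  kron16 (alphaDot p) 1 - kron16 1 (alphaDot p)

/-- P·M⁺ -/
def MplusDot (P : R3) : Matrix (Fin 16) (Fin 16) ℂ :=
  (2⁻¹ : ℂ) • (kron16 (alphaDot P) 1 + kron16 1 (alphaDot P))

/-- τ(p) -/
def tau (p : R3) : Matrix (Fin 16) (Fin 16) ℂ :=
  -((‖p‖ ^ 2 : ℝ) : ℂ)⁻¹ • kron16 (alphaDot p) (alphaDot p)

def Pplus (p : R3) : Matrix (Fin 16) (Fin 16) ℂ := (2⁻¹ : ℂ) • (1 + tau p)
def Pminus (p : R3) : Matrix (Fin 16) (Fin 16) ℂ := (2⁻¹ : ℂ) • (1 - tau p)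

def Bmat : Matrix (Fin 16) (Fin 16) ℂ := (2 : ℂ) • kron16 diracBeta diracBeta


lemma kron16_mul (A B C D : Matrix (Fin 4) (Fin 4) ℂ) :
    kron16 A B * kron16 C D = kron16 (A*C) (B*D) := by
  simp [kron16, Matrix.reindex_apply, Matrix.submatrix_mul_equiv, Matrix.mul_kronecker_mul]

lemma kron16_smul_left (x : ℂ) (A B : Matrix (Fin 4) (Fin 4) ℂ) :
    kron16 (x • A) B = x • kron16 A B := by
  simp [kron16, Matrix.smul_kronecker, Matrix.submatrix_smul]

lemma kron16_smul_right (x : ℂ) (A B : Matrix (Fin 4) (Fin 4) ℂ) :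
    kron16 A (x • B) = x • kron16 A B := by
  simp [kron16, Matrix.kronecker_smul, Matrix.submatrix_smul]

lemma alphaDot_explicit (p : R3) : alphaDot p =
    !![0, 0, (p 2 : ℂ), (p 0 : ℂ) - (p 1 : ℂ)*I;
       0, 0, (p 0 : ℂ) + (p 1 : ℂ)*I, -(p 2 : ℂ);
       (p 2 : ℂ), (p 0 : ℂ) - (p 1 : ℂ)*I, 0, 0;
       (p 0 : ℂ) + (p 1 : ℂ)*I, -(p 2 : ℂ), 0, 0] := by
  ext i j
  fin_cases i <;> fin_cases j <;>
    simp [alphaDot, Fin.sum_univ_three, diracAlpha, diracAlpha', σ1, σ2, σ3,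
      Matrix.fromBlocks, finSumFinEquiv, Fin.addCases, Matrix.vecHead, Matrix.vecTail,
      Fin.subNat, Fin.castLT, Sum.elim,
      show ((2:Fin 4):ℕ) = 2 from rfl, show ((3:Fin 4):ℕ) = 3 from rfl] <;> ring

lemma alphaDot_sq (p : R3) : alphaDot p * alphaDot p = ((‖p‖^2 : ℝ) : ℂ) • 1 := by
  have hn : (‖p‖^2 : ℝ) = (p 0)^2 + (p 1)^2 + (p 2)^2 := by
    rw [EuclideanSpace.norm_eq, Real.sq_sqrt (by positivity)]
    simp [Fin.sum_univ_three, sq]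
  rw [alphaDot_explicit, hn]
  ext i j
  fin_cases i <;> fin_cases j <;>
    simp [Matrix.mul_apply, Fin.sum_univ_four, Matrix.one_apply, Matrix.vecHead,
      Matrix.vecTail, Complex.I_sq] <;>
    ring_nf <;> simp [Complex.I_sq] <;> ring_nf

lemma tau_mul_Mminus (p : R3) (hp : p ≠ 0) :
    tau p * Mminus p = Mminus p ∧ Mminus p * tau p = Mminus p := by
  have hc : ((‖p‖^2 : ℝ) : ℂ) ≠ 0 := by
    exact Complex.ofReal_ne_zero.2 (pow_ne_zero 2 (norm_ne_zero_iff.mpr hp))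
  constructor <;>
  · simp only [tau, Mminus, Matrix.smul_mul, Matrix.mul_smul, mul_sub, sub_mul, kron16_mul,
      alphaDot_sq, Matrix.one_mul, Matrix.mul_one, kron16_smul_left, kron16_smul_right]
    rw [smul_smul, smul_smul, neg_mul, inv_mul_cancel₀ hc]
    simp only [neg_smul, one_smul]
    abel

/-- STATEMENT 5: for `p ≠ 0`: `P₋(p)(M⁻·p) = 0`, `(M⁻·p)P₋(p) = 0` and
`P₊(p)(M⁻·p)P₊(p) = M⁻·p`. -/
theorem stmt5 (p : R3) (hp : p ≠ 0) :
    Pminus p * Mminus p = 0 ∧ Mminus p * Pminus p = 0 ∧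
      Pplus p * Mminus p * Pplus p = Mminus p := by
  obtain ⟨h1, h2⟩ := tau_mul_Mminus p hp
  have hl : Pplus p * Mminus p = Mminus p := by
    rw [Pplus, Matrix.smul_mul, add_mul, Matrix.one_mul, h1, ← two_smul ℂ, smul_smul]
    norm_num
  have hr : Mminus p * Pplus p = Mminus p := by
    rw [Pplus, Matrix.mul_smul, mul_add, Matrix.mul_one, h2, ← two_smul ℂ, smul_smul]
    norm_num
  refine ⟨?_, ?_, by rw [hl, hr]⟩
  · rw [Pminus, Matrix.smul_mul, sub_mul, Matrix.one_mul, h1, sub_self, smul_zero]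
  · rw [Pminus, Matrix.mul_smul, mul_sub, Matrix.mul_one, h2, sub_self, smul_zero]
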